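/- arXiv:0911.2694 — 3 statements merged into one kernel-verified Lean document; each statement's English description precedes it below -/
import Mathlib

section
/- For a traceless symmetric bilinear form E on an n-dimensional real inner product space (n ≥ 2), the trace of E³ satisfies tr(E³) ≤ ((n-2)/√(n(n-1))) · |E|³, where |E| is the Frobenius norm of E. -/
/-!
Diagonalize `E` in an orthonormal eigenbasis: its eigenvalues `λᵢ` sum to zero and
`tr Eᵏ = ∑ λᵢᵏ`. Write `∑ λᵢ² = n (n - 1) q²`. Cauchy–Schwarz on the other `n - 1` eigenvalues
gives `λᵢ ≤ (n - 1) q`, hence `(λᵢ - (n - 1) q) (λᵢ + q)² ≤ 0`; summing over `i` gives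
`∑ λᵢ³ ≤ (n - 2) q ∑ λᵢ²`, which is the claim. Equality holds at `λ = ((n - 1) q, -q, …, -q)`.
-/

open Finset

section

variable {ι : Type*} [Fintype ι] {x : ι → ℝ}

theorem card_mul_sq_le_of_sum_eq_zero (hx : ∑ i, x i = 0) (i : ι) :
    Fintype.card ι * x i ^ 2 ≤ (Fintype.card ι - 1) * ∑ j, x j ^ 2 := by
  classical
  have hrest : ∑ j ∈ univ.erase i, x j = -x i := by
    linarith [add_sum_erase univ x (mem_univ i)]
  have hrest_sq : ∑ j ∈ univ.erase i, x j ^ 2 = ∑ j, x j ^ 2 - x i ^ 2 := by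
    linarith [add_sum_erase univ (fun j ↦ x j ^ 2) (mem_univ i)]
  have hcard : ((univ.erase i).card : ℝ) = Fintype.card ι - 1 := by
    rw [card_erase_of_mem (mem_univ i), card_univ, Nat.cast_pred (Fintype.card_pos_iff.2 ⟨i⟩)]
  have cauchySchwarz := sq_sum_le_card_mul_sum_sq (s := univ.erase i) (f := x)
  rw [hrest, hrest_sq, hcard] at cauchySchwarz
  linarith

theorem sum_pow_three_le_of_forall_le (hx : ∑ i, x i = 0) {M : ℝ} (hM : ∀ i, x i ≤ M) (q : ℝ) :
    ∑ i, x i ^ 3 ≤ (M - 2 * q) * ∑ i, x i ^ 2 + Fintype.card ι * M * q ^ 2 := by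
  have hpt : ∀ i, x i ^ 3 ≤ (M - 2 * q) * x i ^ 2 + (2 * M * q - q ^ 2) * x i + M * q ^ 2 :=
    fun i ↦ by nlinarith [mul_nonpos_of_nonpos_of_nonneg (sub_nonpos.2 (hM i)) (sq_nonneg (x i + q))]
  calc ∑ i, x i ^ 3
      ≤ ∑ i, ((M - 2 * q) * x i ^ 2 + (2 * M * q - q ^ 2) * x i + M * q ^ 2) :=
        sum_le_sum fun i _ ↦ hpt i
    _ = (M - 2 * q) * ∑ i, x i ^ 2 + Fintype.card ι * M * q ^ 2 := by
        simp only [sum_add_distrib, ← mul_sum, hx, sum_const, card_univ, nsmul_eq_mul]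
        ring

theorem sum_pow_three_le_of_sum_eq_zero (hι : 2 ≤ Fintype.card ι) (hx : ∑ i, x i = 0) :
    ∑ i, x i ^ 3 ≤ ((Fintype.card ι - 2) / √(Fintype.card ι * (Fintype.card ι - 1))) *
      √(∑ i, x i ^ 2) ^ 3 := by
  set n : ℝ := (Fintype.card ι : ℝ)
  set s := ∑ i, x i ^ 2
  have hn : (2 : ℝ) ≤ n := Nat.ofNat_le_cast.2 hι
  set c := √(n * (n - 1))
  have hc : 0 < c := Real.sqrt_pos.2 (by nlinarith)
  have hc2 : c ^ 2 = n * (n - 1) := Real.sq_sqrt (by nlinarith)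
  have hr2 : √s ^ 2 = s := Real.sq_sqrt (sum_nonneg fun i _ ↦ sq_nonneg (x i))
  set q := √s / c
  have hM : ∀ i, x i ≤ (n - 1) * q := by
    intro i
    refine (abs_le_of_sq_le_sq' ?_ (mul_nonneg (by linarith) (by positivity))).2
    rw [mul_pow, div_pow, hr2, hc2, ← mul_div_assoc, le_div_iff₀ (by nlinarith)]
    calc x i ^ 2 * (n * (n - 1)) = (n - 1) * (n * x i ^ 2) := by ring
      _ ≤ (n - 1) * ((n - 1) * s) :=
        mul_le_mul_of_nonneg_left (card_mul_sq_le_of_sum_eq_zero hx i) (by linarith)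
      _ = (n - 1) ^ 2 * s := by ring
  calc ∑ i, x i ^ 3 ≤ ((n - 1) * q - 2 * q) * s + n * ((n - 1) * q) * q ^ 2 :=
        sum_pow_three_le_of_forall_le hx hM q
    _ = (n - 2) / c * √s ^ 3 := by
        simp only [q]
        field_simp
        rw [hc2]
        linear_combination (-√s * n * (n - 1) * (n - 3)) * hr2

end

namespace LinearMap.IsSymmetric

variable {𝕜 E : Type*} [RCLike 𝕜] [NormedAddCommGroup E] [InnerProductSpace 𝕜 E]
  [FiniteDimensional 𝕜 E] {n : ℕ} {T : E →ₗ[𝕜] E}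

theorem trace_pow_eq_sum_eigenvalues_pow (hT : T.IsSymmetric) (hn : Module.finrank 𝕜 E = n)
    (k : ℕ) : (T ^ k).trace 𝕜 E = ∑ i, (hT.eigenvalues hn i : 𝕜) ^ k := by
  rw [trace_eq_sum_inner _ (hT.eigenvectorBasis hn)]
  refine Fintype.sum_congr _ _ fun i ↦ ?_
  rw [(hT.hasEigenvector_eigenvectorBasis hn i).pow_apply, inner_smul_right,
    inner_self_eq_norm_sq_to_K, (hT.eigenvectorBasis hn).orthonormal.1 i]
  simp

end LinearMap.IsSymmetric

/-- Huisken's inequality: for a traceless symmetric (self-adjoint) endomorphism `E`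
of an `n`-dimensional real inner product space (`n ≥ 2`),
`tr (E³) ≤ ((n-2)/√(n(n-1))) · |E|³`, where `|E| = √(tr (E²))`. -/
theorem traceCube_le_of_traceless_symmetric
    (n : ℕ) (hn : 2 ≤ n) (V : Type*) [NormedAddCommGroup V] [InnerProductSpace ℝ V]
    [FiniteDimensional ℝ V] (hdim : Module.finrank ℝ V = n)
    (E : V →ₗ[ℝ] V) (hE : LinearMap.IsSymmetric E)
    (htr : LinearMap.trace ℝ V E = 0) :
    LinearMap.trace ℝ V (E ∘ₗ E ∘ₗ E) ≤
      (((n : ℝ) - 2) / Real.sqrt (n * (n - 1))) *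
        (Real.sqrt (LinearMap.trace ℝ V (E ∘ₗ E))) ^ 3 := by
  have hsq : E ∘ₗ E = E ^ 2 := (sq E).symm
  have hcube : E ∘ₗ E ∘ₗ E = E ^ 3 := by rw [pow_succ', sq]; rfl
  have htrace_pow (k : ℕ) : (E ^ k).trace ℝ V = ∑ i, hE.eigenvalues hdim i ^ k := by
    simpa only [RCLike.ofReal_real_eq_id, id] using hE.trace_pow_eq_sum_eigenvalues_pow hdim k
  have hsum : ∑ i, hE.eigenvalues hdim i = 0 := by
    simpa only [pow_one, htr] using (htrace_pow 1).symm
  have hscalar := sum_pow_three_le_of_sum_eq_zero (hn.trans_eq (Fintype.card_fin n).symm) hsum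
  rw [Fintype.card_fin] at hscalar
  rwa [hcube, hsq, htrace_pow, htrace_pow]
end

section
/- For a traceless symmetric real n×n matrix E (n ≥ 2), every eigenvalue λ of E satisfies |λ| ≤ √((n-1)/n) · |E|, where |E| is the Frobenius norm. -/
/-!
Let `N = card ι` and `F = tracelessOuter v = N • v vᵀ - (v ⬝ᵥ v) • 1`, a traceless matrix with
`F v = (N - 1)(v ⬝ᵥ v) v`. For a traceless `A` with `A v = μ v`, the Frobenius pairing is
`⟪A, F⟫ = N (v ⬝ᵥ A v) - (v ⬝ᵥ v) tr A = N μ (v ⬝ᵥ v)`. Cauchy–Schwarz `⟪E, F⟫² ≤ |E|² ⟪F, F⟫` then reads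
`N² l² (v ⬝ᵥ v)² ≤ |E|² N (N - 1) (v ⬝ᵥ v)²`, i.e. `N l² ≤ (N - 1) |E|²`.
-/

open Finset Matrix

namespace Matrix

variable {ι κ : Type*} [Fintype ι] [Fintype κ]

theorem sq_sum_sum_mul_le (A B : Matrix ι κ ℝ) :
    (∑ i, ∑ j, A i j * B i j) ^ 2 ≤ (∑ i, ∑ j, A i j ^ 2) * ∑ i, ∑ j, B i j ^ 2 := by
  simp only [← sum_product']
  exact sum_mul_sq_le_sq_mul_sq _ _ _

theorem sum_sum_mul_vecMulVec (A : Matrix ι κ ℝ) (u : ι → ℝ) (w : κ → ℝ) :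
    ∑ i, ∑ j, A i j * vecMulVec u w i j = u ⬝ᵥ A *ᵥ w := by
  simp only [vecMulVec_apply, dotProduct, mulVec, mul_sum]
  exact sum_congr rfl fun i _ => sum_congr rfl fun j _ => by ring

variable [DecidableEq ι]

theorem sum_sum_mul_one (A : Matrix ι ι ℝ) :
    ∑ i, ∑ j, A i j * (1 : Matrix ι ι ℝ) i j = A.trace := by
  simp [one_apply, trace]

noncomputable def tracelessOuter (v : ι → ℝ) : Matrix ι ι ℝ :=
  (Fintype.card ι : ℝ) • vecMulVec v v - (v ⬝ᵥ v) • 1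

theorem trace_tracelessOuter (v : ι → ℝ) : (tracelessOuter v).trace = 0 := by
  simp [tracelessOuter, trace_vecMulVec, dotProduct, mul_comm]

theorem tracelessOuter_mulVec_self (v : ι → ℝ) :
    tracelessOuter v *ᵥ v = (((Fintype.card ι : ℝ) - 1) * (v ⬝ᵥ v)) • v := by
  simp only [tracelessOuter, sub_mulVec, smul_mulVec, vecMulVec_mulVec, one_mulVec,
    op_smul_eq_smul, smul_smul]
  module

theorem sum_sum_mul_tracelessOuter {A : Matrix ι ι ℝ} (htr : A.trace = 0) {μ : ℝ}
    {v : ι → ℝ} (hA : A *ᵥ v = μ • v) :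
    ∑ i, ∑ j, A i j * tracelessOuter v i j = Fintype.card ι * μ * (v ⬝ᵥ v) := by
  simp only [tracelessOuter, sub_apply, smul_apply, smul_eq_mul, mul_sub, sum_sub_distrib,
    mul_left_comm _ (Fintype.card ι : ℝ), mul_left_comm _ (v ⬝ᵥ v), ← mul_sum,
    sum_sum_mul_vecMulVec, sum_sum_mul_one, hA, htr, dotProduct_smul, smul_eq_mul]
  ring

theorem sq_mul_card_le_of_trace_eq_zero {E : Matrix ι ι ℝ} (htr : E.trace = 0) {l : ℝ}
    {v : ι → ℝ} (hv : v ≠ 0) (heig : E *ᵥ v = l • v) :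
    l ^ 2 * Fintype.card ι ≤ (Fintype.card ι - 1) * ∑ i, ∑ j, E i j ^ 2 := by
  have hN : (0 : ℝ) < Fintype.card ι := by
    obtain ⟨i, -⟩ := Function.ne_iff.mp hv
    exact_mod_cast Fintype.card_pos_iff.mpr ⟨i⟩
  have hs : 0 < v ⬝ᵥ v := dotProduct_self_star_pos_iff.mpr hv
  have hCS := sq_sum_sum_mul_le E (tracelessOuter v)
  simp only [sq (tracelessOuter v _ _)] at hCS
  rw [sum_sum_mul_tracelessOuter htr heig,
    sum_sum_mul_tracelessOuter (trace_tracelessOuter v) (tracelessOuter_mulVec_self v)] at hCS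
  refine le_of_mul_le_mul_left ?_ (by positivity : (0 : ℝ) < Fintype.card ι * (v ⬝ᵥ v) ^ 2)
  linear_combination hCS

end Matrix

theorem eigenvalue_bound_traceless_symm_general
    (n : ℕ) (E : Matrix (Fin n) (Fin n) ℝ)
    (htr : E.trace = 0)
    (l : ℝ) (v : Fin n → ℝ) (hv : v ≠ 0) (heig : E.mulVec v = l • v) :
    |l| ≤ Real.sqrt (((n : ℝ) - 1) / n) * Real.sqrt (∑ i, ∑ j, E i j ^ 2) := by
  have hn : (0 : ℝ) < n := by
    obtain ⟨i, -⟩ := Function.ne_iff.mp hv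
    exact_mod_cast i.pos
  have hbound := sq_mul_card_le_of_trace_eq_zero htr hv heig
  rw [Fintype.card_fin] at hbound
  rw [← Real.sqrt_mul' _ (sum_nonneg fun i _ => sum_nonneg fun j _ => sq_nonneg (E i j)),
    ← Real.sqrt_sq_eq_abs, div_mul_eq_mul_div]
  exact Real.sqrt_le_sqrt ((le_div_iff₀ hn).mpr hbound)

/-- Every eigenvalue `l` of a traceless symmetric real `n × n` matrix `E` (`n ≥ 2`)
satisfies `|l| ≤ √((n-1)/n) · |E|`, where `|E|` is the Frobenius norm. -/
theorem eigenvalue_bound_traceless_symm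
    (n : ℕ) (hn : 2 ≤ n) (E : Matrix (Fin n) (Fin n) ℝ)
    (hsym : E.IsSymm) (htr : E.trace = 0)
    (l : ℝ) (v : Fin n → ℝ) (hv : v ≠ 0) (heig : E.mulVec v = l • v) :
    |l| ≤ Real.sqrt (((n : ℝ) - 1) / n) * Real.sqrt (∑ i, ∑ j, E i j ^ 2) :=
  eigenvalue_bound_traceless_symm_general n E htr l v hv heig
end

section
/- For a traceless Codazzi tensor E on a Riemannian n-manifold, the refined Kato inequality |∇|E||² ≤ (n/(n+2))·|∇E|² holds at points where E ≠ 0. As a pointwise algebraic corollary used in the paper: if T is a symmetric trilinear-indexed array ∇E satisfying the traceless Codazzi symmetries, then the norm of its contraction against E/|E| is at most √(n/(n+2))·|∇E|. -/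
open Finset

lemma kato_opnorm (n : ℕ) (E : Fin n → Fin n → ℝ) (hEsymm : ∀ i j, E i j = E j i)
    (hEtrace : ∑ i, E i i = 0) (v : Fin n → ℝ) :
    (n : ℝ) * ∑ k, (∑ i, E k i * v i) ^ 2 ≤
      ((n : ℝ) - 1) * (∑ k, ∑ i, (E k i) ^ 2) * ∑ k, (v k) ^ 2 := by
  rcases Nat.lt_or_ge n 2 with hn | hn
  · interval_cases n
    · simp
    · have h0 : E 0 0 = 0 := by simpa using hEtrace
      simp [Fin.sum_univ_one, h0]
  have hn2 : (2:ℝ) ≤ (n:ℝ) := by exact_mod_cast hn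
  have hnpos : (0:ℝ) < (n:ℝ) := by linarith
  set c : Fin n → ℝ := fun k => ∑ i, E k i * v i with hc
  set CC : ℝ := ∑ k, (c k) ^ 2 with hCC
  set s : ℝ := ∑ k, (v k) ^ 2 with hs
  set EE : ℝ := ∑ k, ∑ i, (E k i) ^ 2 with hEE
  set α : ℝ := ∑ k, c k * v k with hα
  set B : Fin n → Fin n → ℝ :=
    fun k i => (c k * v i + v k * c i) / 2 - (α / n) * (if k = i then 1 else 0) with hB
  have hCC0 : 0 ≤ CC := Finset.sum_nonneg fun _ _ => sq_nonneg _
  have hs0 : 0 ≤ s := Finset.sum_nonneg fun _ _ => sq_nonneg _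
  have hEE0 : 0 ≤ EE :=
    Finset.sum_nonneg fun _ _ => Finset.sum_nonneg fun _ _ => sq_nonneg _
  -- elementary contractions
  have e1 : ∑ k, ∑ i, E k i * (c k * v i) = CC := by
    rw [hCC]
    refine Finset.sum_congr rfl fun k _ => ?_
    have : ∑ i, E k i * (c k * v i) = c k * ∑ i, E k i * v i := by
      rw [Finset.mul_sum]; exact Finset.sum_congr rfl fun i _ => by ring
    rw [this]
    have h : ∑ i, E k i * v i = c k := rfl
    rw [h]; ring
  have e2 : ∑ k, ∑ i, E k i * (v k * c i) = CC := by
    rw [Finset.sum_comm, hCC]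
    refine Finset.sum_congr rfl fun i _ => ?_
    have : ∑ k, E k i * (v k * c i) = c i * ∑ k, E i k * v k := by
      rw [Finset.mul_sum]
      exact Finset.sum_congr rfl fun k _ => by rw [hEsymm i k]; ring
    rw [this]
    have : ∑ k, E i k * v k = c i := rfl
    rw [this]; ring
  have e3 : ∑ k, ∑ i, E k i * (if k = i then 1 else 0) = 0 := by
    have : ∀ k : Fin n, ∑ i, E k i * (if k = i then 1 else 0) = E k k := by
      intro k
      simp [mul_ite, Finset.sum_ite_eq]
    simp only [this]
    exact hEtrace
  -- ⟨E, B⟩ = CC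
  have h1 : ∑ k, ∑ i, E k i * B k i = CC := by
    have expand : ∀ k i, E k i * B k i =
        (E k i * (c k * v i)) / 2 + (E k i * (v k * c i)) / 2
          - (α / n) * (E k i * (if k = i then 1 else 0)) := by
      intro k i; simp only [hB]; ring
    calc ∑ k, ∑ i, E k i * B k i
        = ∑ k, ∑ i, ((E k i * (c k * v i)) / 2 + (E k i * (v k * c i)) / 2
            - (α / n) * (E k i * (if k = i then 1 else 0))) := by
          exact Finset.sum_congr rfl fun k _ => Finset.sum_congr rfl fun i _ => expand k i
      _ = (∑ k, ∑ i, E k i * (c k * v i)) / 2 + (∑ k, ∑ i, E k i * (v k * c i)) / 2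
            - (α / n) * (∑ k, ∑ i, E k i * (if k = i then 1 else 0)) := by
          simp only [Finset.sum_add_distrib, Finset.sum_sub_distrib, ← Finset.sum_div,
            ← Finset.mul_sum]
      _ = CC := by rw [e1, e2, e3]; ring
  -- n * |B|² = n*CC*s/2 + n*α²/2 - α²
  have s1 : ∑ k, ∑ i, (c k * v i) ^ 2 = CC * s := by
    rw [hCC, hs, Finset.sum_mul_sum]
    exact Finset.sum_congr rfl fun k _ => Finset.sum_congr rfl fun i _ => by ring
  have s2 : ∑ k, ∑ i, (c k * v i) * (v k * c i) = α ^ 2 := by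
    rw [show α ^ 2 = α * α by ring, hα, Finset.sum_mul_sum]
    exact Finset.sum_congr rfl fun k _ => Finset.sum_congr rfl fun i _ => by ring
  have s3 : ∑ k, ∑ i, (v k * c i) ^ 2 = s * CC := by
    rw [hs, hCC, Finset.sum_mul_sum]
    exact Finset.sum_congr rfl fun k _ => Finset.sum_congr rfl fun i _ => by ring
  have s4 : ∑ k, ∑ i, (c k * v i + v k * c i) * (if k = i then 1 else 0) = 2 * α := by
    have : ∀ k : Fin n, ∑ i, (c k * v i + v k * c i) * (if k = i then 1 else 0)
        = 2 * (c k * v k) := by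
      intro k
      simp [mul_ite, Finset.sum_ite_eq]
      ring
    simp only [this, ← Finset.mul_sum, ← hα]
  have s5 : ∑ k : Fin n, ∑ i : Fin n, ((if k = i then (1:ℝ) else 0)) = (n : ℝ) := by
    simp [Finset.sum_ite_eq]
  have h2 : (n : ℝ) * (∑ k, ∑ i, (B k i) ^ 2)
      = (n : ℝ) * (CC * s) / 2 + (n : ℝ) * α ^ 2 / 2 - α ^ 2 := by
    have expand : ∀ k i, (B k i) ^ 2 =
        (c k * v i) ^ 2 / 4 + ((c k * v i) * (v k * c i)) / 2 + (v k * c i) ^ 2 / 4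
          - (α / n) * ((c k * v i + v k * c i) * (if k = i then 1 else 0))
          + (α / n) ^ 2 * (if k = i then 1 else 0) := by
      intro k i; simp only [hB]; split_ifs <;> ring
    have : ∑ k, ∑ i, (B k i) ^ 2 =
        (∑ k, ∑ i, (c k * v i) ^ 2) / 4 + (∑ k, ∑ i, (c k * v i) * (v k * c i)) / 2
          + (∑ k, ∑ i, (v k * c i) ^ 2) / 4
          - (α / n) * (∑ k, ∑ i, (c k * v i + v k * c i) * (if k = i then 1 else 0))
          + (α / n) ^ 2 * (∑ k : Fin n, ∑ i : Fin n, ((if k = i then (1:ℝ) else 0))) := by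
      have step1 : ∑ k, ∑ i, (B k i) ^ 2 = ∑ k, ∑ i, ((c k * v i) ^ 2 / 4
            + ((c k * v i) * (v k * c i)) / 2 + (v k * c i) ^ 2 / 4
            - (α / n) * ((c k * v i + v k * c i) * (if k = i then 1 else 0))
            + (α / n) ^ 2 * (if k = i then 1 else 0)) :=
        Finset.sum_congr rfl fun k _ => Finset.sum_congr rfl fun i _ => expand k i
      rw [step1]
      simp only [Finset.sum_add_distrib, Finset.sum_sub_distrib, ← Finset.sum_div,
        ← Finset.mul_sum]
    rw [this, s1, s2, s3, s4, s5]
    field_simp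
    ring
  -- Cauchy–Schwarz
  have h3 : CC ^ 2 ≤ EE * (∑ k, ∑ i, (B k i) ^ 2) := by
    have := Finset.sum_mul_sq_le_sq_mul_sq (univ : Finset (Fin n × Fin n))
      (fun p => E p.1 p.2) (fun p => B p.1 p.2)
    simpa [Fintype.sum_prod_type, h1, ← hEE] using this
  have h4 : α ^ 2 ≤ CC * s := by
    have := Finset.sum_mul_sq_le_sq_mul_sq (univ : Finset (Fin n)) c v
    simpa [← hα, ← hCC, ← hs] using this
  -- combine
  have h3n : (n : ℝ) * CC ^ 2 ≤ EE * ((n : ℝ) * (CC * s) / 2 + (n : ℝ) * α ^ 2 / 2 - α ^ 2) := by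
    have := mul_le_mul_of_nonneg_left h3 (le_of_lt hnpos)
    calc (n:ℝ) * CC ^ 2 ≤ (n:ℝ) * (EE * (∑ k, ∑ i, (B k i) ^ 2)) := this
      _ = EE * ((n : ℝ) * (∑ k, ∑ i, (B k i) ^ 2)) := by ring
      _ = _ := by rw [h2]
  show (n : ℝ) * CC ≤ ((n : ℝ) - 1) * EE * s
  clear h1 h2 h3 e1 e2 e3 s1 s2 s3 s4 s5 hB hc hCC hs hEE hα
  clear_value c B CC s EE α
  rcases eq_or_lt_of_le hCC0 with hz | hpos
  · rw [← hz]
    have : 0 ≤ ((n:ℝ) - 1) * EE * s := by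
      have := mul_nonneg hEE0 hs0
      nlinarith
    linarith
  · have hB2 : 0 ≤ EE * (((n:ℝ) - 2) * (CC * s - α ^ 2)) :=
      mul_nonneg hEE0 (mul_nonneg (by linarith) (by linarith))
    have key : (n:ℝ) * CC * CC ≤ ((n:ℝ) - 1) * EE * s * CC := by nlinarith [h3n, hB2]
    exact le_of_mul_le_mul_right key hpos

set_option maxHeartbeats 2000000 in
/-- Algebraic core of the refined Kato inequality for traceless Codazzi tensors:
if `T` is an array totally symmetric in its three indices with vanishing traces,
and `E` is a symmetric traceless 2-tensor, then
`∑ₖ (∑ᵢⱼ Tₖᵢⱼ Eᵢⱼ)² ≤ (n/(n+2)) |T|² |E|²`. -/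
theorem refined_kato_algebraic
    (n : ℕ) (T : Fin n → Fin n → Fin n → ℝ) (E : Fin n → Fin n → ℝ)
    (hTsymm₁ : ∀ k i j, T k i j = T i k j)
    (hTsymm₂ : ∀ k i j, T k i j = T k j i)
    (hTtrace : ∀ j, ∑ k, T k k j = 0)
    (hEsymm : ∀ i j, E i j = E j i)
    (hEtrace : ∑ i, E i i = 0) :
    ∑ k, (∑ i, ∑ j, T k i j * E i j) ^ 2 ≤
      ((n : ℝ) / (n + 2)) * (∑ k, ∑ i, ∑ j, (T k i j) ^ 2) * (∑ i, ∑ j, (E i j) ^ 2) := by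
  rcases Nat.eq_zero_or_pos n with h0 | hnpos0
  · subst h0; simp
  have hnpos : (0:ℝ) < (n:ℝ) := by exact_mod_cast hnpos0
  have hn2pos : (0:ℝ) < (n:ℝ) + 2 := by linarith
  set v : Fin n → ℝ := fun k => ∑ i, ∑ j, T k i j * E i j with hv
  set c : Fin n → ℝ := fun k => ∑ i, E k i * v i with hc
  set V : ℝ := ∑ k, (v k) ^ 2 with hV
  set TT : ℝ := ∑ k, ∑ i, ∑ j, (T k i j) ^ 2 with hTT
  set EE : ℝ := ∑ i, ∑ j, (E i j) ^ 2 with hEE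
  set CC : ℝ := ∑ k, (c k) ^ 2 with hCC
  have hvdef : ∀ k, ∑ i, ∑ j, T k i j * E i j = v k := fun _ => rfl
  have hcdef : ∀ k, ∑ i, E k i * v i = c k := fun _ => rfl
  have hcdef' : ∀ j, ∑ k, E k j * v k = c j := by
    intro j
    rw [← hcdef j]
    exact Finset.sum_congr rfl fun k _ => by rw [hEsymm k j]
  set β : ℝ := 2 / (3 * ((n:ℝ) + 2)) with hβ
  set S : Fin n → Fin n → Fin n → ℝ := fun k i j =>
    (v k * E i j + v i * E k j + v j * E k i) / 3
      - β * ((if k = i then (1:ℝ) else 0) * c j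
          + (if k = j then (1:ℝ) else 0) * c i + (if i = j then (1:ℝ) else 0) * c k) with hS
  -- ⟨T, v ⊗ E⟩-type identities
  have t1 : ∑ k, ∑ i, ∑ j, T k i j * (v k * E i j) = V := by
    rw [hV]
    refine Finset.sum_congr rfl fun k _ => ?_
    have : ∑ i, ∑ j, T k i j * (v k * E i j) = v k * ∑ i, ∑ j, T k i j * E i j := by
      rw [Finset.mul_sum]
      refine Finset.sum_congr rfl fun i _ => ?_
      rw [Finset.mul_sum]
      exact Finset.sum_congr rfl fun j _ => by ring
    rw [this, hvdef k]; ring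
  have t2 : ∑ k, ∑ i, ∑ j, T k i j * (v i * E k j) = V := by
    rw [hV, Finset.sum_comm]
    refine Finset.sum_congr rfl fun i _ => ?_
    have : ∑ k, ∑ j, T k i j * (v i * E k j) = v i * ∑ k, ∑ j, T i k j * E k j := by
      rw [Finset.mul_sum]
      refine Finset.sum_congr rfl fun k _ => ?_
      rw [Finset.mul_sum]
      refine Finset.sum_congr rfl fun j _ => ?_
      rw [hTsymm₁ k i j]; ring
    rw [this, hvdef i]; ring
  have t3 : ∑ k, ∑ i, ∑ j, T k i j * (v j * E k i) = V := by
    rw [hV]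
    rw [show (∑ k, ∑ i, ∑ j, T k i j * (v j * E k i))
        = ∑ k, ∑ j, ∑ i, T k i j * (v j * E k i) from
      Finset.sum_congr rfl fun k _ => Finset.sum_comm]
    rw [Finset.sum_comm]
    refine Finset.sum_congr rfl fun j _ => ?_
    have : ∑ k, ∑ i, T k i j * (v j * E k i) = v j * ∑ k, ∑ i, T j k i * E k i := by
      rw [Finset.mul_sum]
      refine Finset.sum_congr rfl fun k _ => ?_
      rw [Finset.mul_sum]
      refine Finset.sum_congr rfl fun i _ => ?_
      rw [show T j k i = T k i j from by rw [hTsymm₁ j k i, hTsymm₂ k j i]]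
      ring
    rw [this, hvdef j]; ring
  -- trace terms vanish
  have t4 : ∑ k, ∑ i, ∑ j, T k i j * ((if k = i then (1:ℝ) else 0) * c j) = 0 := by
    have h : ∑ k, ∑ i, ∑ j, T k i j * ((if k = i then (1:ℝ) else 0) * c j)
        = ∑ k, ∑ j, T k k j * c j := by
      simp [mul_ite, ite_mul, mul_zero, zero_mul, mul_one, Finset.sum_ite_eq,
        Finset.sum_ite_irrel]
    rw [h, Finset.sum_comm]
    refine Finset.sum_eq_zero fun j _ => ?_
    rw [← Finset.sum_mul, hTtrace j, zero_mul]
  have t5 : ∑ k, ∑ i, ∑ j, T k i j * ((if k = j then (1:ℝ) else 0) * c i) = 0 := by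
    have h : ∑ k, ∑ i, ∑ j, T k i j * ((if k = j then (1:ℝ) else 0) * c i)
        = ∑ k, ∑ i, T k i k * c i := by
      simp [mul_ite, ite_mul, mul_zero, zero_mul, mul_one, Finset.sum_ite_eq,
        Finset.sum_ite_irrel]
    rw [h, Finset.sum_comm]
    refine Finset.sum_eq_zero fun i _ => ?_
    have : ∑ k, T k i k * c i = (∑ k, T k k i) * c i := by
      rw [Finset.sum_mul]
      exact Finset.sum_congr rfl fun k _ => by rw [hTsymm₂ k i k]
    rw [this, hTtrace i, zero_mul]
  have t6 : ∑ k, ∑ i, ∑ j, T k i j * ((if i = j then (1:ℝ) else 0) * c k) = 0 := by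
    have h : ∑ k, ∑ i, ∑ j, T k i j * ((if i = j then (1:ℝ) else 0) * c k)
        = ∑ k, ∑ i, T k i i * c k := by
      simp [mul_ite, ite_mul, mul_zero, zero_mul, mul_one, Finset.sum_ite_eq,
        Finset.sum_ite_irrel]
    rw [h]
    refine Finset.sum_eq_zero fun k _ => ?_
    have : ∑ i, T k i i * c k = (∑ i, T i i k) * c k := by
      rw [Finset.sum_mul]
      refine Finset.sum_congr rfl fun i _ => ?_
      rw [show T k i i = T i i k from by rw [hTsymm₁ k i i, hTsymm₂ i k i]]
    rw [this, hTtrace k, zero_mul]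
  -- ⟨T, S⟩ = V
  have hTS : ∑ k, ∑ i, ∑ j, T k i j * S k i j = V := by
    have expand : ∀ k i j, T k i j * S k i j =
        T k i j * (v k * E i j) / 3 + T k i j * (v i * E k j) / 3
          + T k i j * (v j * E k i) / 3
          - β * (T k i j * ((if k = i then (1:ℝ) else 0) * c j)
              + T k i j * ((if k = j then (1:ℝ) else 0) * c i)
              + T k i j * ((if i = j then (1:ℝ) else 0) * c k)) := by
      intro k i j; simp only [hS]; ring
    have h : ∑ k, ∑ i, ∑ j, T k i j * S k i j =
        (∑ k, ∑ i, ∑ j, T k i j * (v k * E i j)) / 3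
          + (∑ k, ∑ i, ∑ j, T k i j * (v i * E k j)) / 3
          + (∑ k, ∑ i, ∑ j, T k i j * (v j * E k i)) / 3
          - β *
              ((∑ k, ∑ i, ∑ j, T k i j * ((if k = i then (1:ℝ) else 0) * c j))
              + (∑ k, ∑ i, ∑ j, T k i j * ((if k = j then (1:ℝ) else 0) * c i))
              + (∑ k, ∑ i, ∑ j, T k i j * ((if i = j then (1:ℝ) else 0) * c k))) := by
      rw [show (∑ k, ∑ i, ∑ j, T k i j * S k i j) = ∑ k, ∑ i, ∑ j,
          (T k i j * (v k * E i j) / 3 + T k i j * (v i * E k j) / 3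
          + T k i j * (v j * E k i) / 3
          - β * (T k i j * ((if k = i then (1:ℝ) else 0) * c j)
              + T k i j * ((if k = j then (1:ℝ) else 0) * c i)
              + T k i j * ((if i = j then (1:ℝ) else 0) * c k))) from
        Finset.sum_congr rfl fun k _ => Finset.sum_congr rfl fun i _ =>
          Finset.sum_congr rfl fun j _ => expand k i j]
      simp only [Finset.sum_add_distrib, Finset.sum_sub_distrib, ← Finset.sum_div,
        ← Finset.mul_sum]
    rw [h, t1, t2, t3, t4, t5, t6]; ring
  -- squares of the symmetric part
  have q1 : ∑ k, ∑ i, ∑ j, (v k * E i j) ^ 2 = V * EE := by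
    rw [hV, hEE, Finset.sum_mul]
    refine Finset.sum_congr rfl fun k _ => ?_
    rw [Finset.mul_sum]
    refine Finset.sum_congr rfl fun i _ => ?_
    rw [Finset.mul_sum]
    exact Finset.sum_congr rfl fun j _ => by ring
  have q2 : ∑ k, ∑ i, ∑ j, (v i * E k j) ^ 2 = V * EE := by
    rw [Finset.sum_comm, hV, hEE, Finset.sum_mul]
    refine Finset.sum_congr rfl fun i _ => ?_
    rw [Finset.mul_sum]
    refine Finset.sum_congr rfl fun k _ => ?_
    rw [Finset.mul_sum]
    exact Finset.sum_congr rfl fun j _ => by ring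
  have q3 : ∑ k, ∑ i, ∑ j, (v j * E k i) ^ 2 = V * EE := by
    rw [show (∑ k, ∑ i, ∑ j, (v j * E k i) ^ 2)
        = ∑ k, ∑ j, ∑ i, (v j * E k i) ^ 2 from
      Finset.sum_congr rfl fun k _ => Finset.sum_comm]
    rw [Finset.sum_comm, hV, hEE, Finset.sum_mul]
    refine Finset.sum_congr rfl fun j _ => ?_
    rw [Finset.mul_sum]
    refine Finset.sum_congr rfl fun k _ => ?_
    rw [Finset.mul_sum]
    exact Finset.sum_congr rfl fun i _ => by ring
  -- cross terms of the symmetric part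
  have x1 : ∑ k, ∑ i, ∑ j, (v k * E i j) * (v i * E k j) = CC := by
    rw [show (∑ k, ∑ i, ∑ j, (v k * E i j) * (v i * E k j))
        = ∑ k, ∑ j, ∑ i, (v k * E i j) * (v i * E k j) from
      Finset.sum_congr rfl fun k _ => Finset.sum_comm]
    rw [Finset.sum_comm, hCC]
    refine Finset.sum_congr rfl fun j _ => ?_
    have : ∑ k, ∑ i, (v k * E i j) * (v i * E k j)
        = (∑ k, E k j * v k) * (∑ i, E i j * v i) := by
      rw [Finset.sum_mul_sum]
      exact Finset.sum_congr rfl fun k _ => Finset.sum_congr rfl fun i _ => by ring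
    rw [this, hcdef' j]; ring
  have x2 : ∑ k, ∑ i, ∑ j, (v k * E i j) * (v j * E k i) = CC := by
    rw [Finset.sum_comm, hCC]
    refine Finset.sum_congr rfl fun i _ => ?_
    have : ∑ k, ∑ j, (v k * E i j) * (v j * E k i)
        = (∑ k, E k i * v k) * (∑ j, E i j * v j) := by
      rw [Finset.sum_mul_sum]
      exact Finset.sum_congr rfl fun k _ => Finset.sum_congr rfl fun j _ => by ring
    rw [this, hcdef' i, hcdef i]; ring
  have x3 : ∑ k, ∑ i, ∑ j, (v i * E k j) * (v j * E k i) = CC := by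
    rw [hCC]
    refine Finset.sum_congr rfl fun k _ => ?_
    have : ∑ i, ∑ j, (v i * E k j) * (v j * E k i)
        = (∑ i, E k i * v i) * (∑ j, E k j * v j) := by
      rw [Finset.sum_mul_sum]
      exact Finset.sum_congr rfl fun i _ => Finset.sum_congr rfl fun j _ => by ring
    rw [this, hcdef k]; ring
  -- cross terms with the delta part
  have a1 : ∑ k, ∑ i, ∑ j, (v k * E i j) * ((if k = i then (1:ℝ) else 0) * c j) = CC := by
    have h : ∑ k, ∑ i, ∑ j, (v k * E i j) * ((if k = i then (1:ℝ) else 0) * c j)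
        = ∑ k, ∑ j, v k * E k j * c j := by
      simp [mul_ite, ite_mul, mul_zero, zero_mul, mul_one, Finset.sum_ite_eq,
        Finset.sum_ite_irrel, mul_assoc]
    rw [h, Finset.sum_comm, hCC]
    refine Finset.sum_congr rfl fun j _ => ?_
    have : ∑ k, v k * E k j * c j = (∑ k, E k j * v k) * c j := by
      rw [Finset.sum_mul]; exact Finset.sum_congr rfl fun k _ => by ring
    rw [this, hcdef' j]; ring
  have a2 : ∑ k, ∑ i, ∑ j, (v k * E i j) * ((if k = j then (1:ℝ) else 0) * c i) = CC := by
    have h : ∑ k, ∑ i, ∑ j, (v k * E i j) * ((if k = j then (1:ℝ) else 0) * c i)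
        = ∑ k, ∑ i, v k * E i k * c i := by
      simp [mul_ite, ite_mul, mul_zero, zero_mul, mul_one, Finset.sum_ite_eq,
        Finset.sum_ite_irrel, mul_assoc]
    rw [h, Finset.sum_comm, hCC]
    refine Finset.sum_congr rfl fun i _ => ?_
    have : ∑ k, v k * E i k * c i = (∑ k, E i k * v k) * c i := by
      rw [Finset.sum_mul]; exact Finset.sum_congr rfl fun k _ => by ring
    rw [this, hcdef i]; ring
  have a3 : ∑ k, ∑ i, ∑ j, (v k * E i j) * ((if i = j then (1:ℝ) else 0) * c k) = 0 := by
    have h : ∑ k, ∑ i, ∑ j, (v k * E i j) * ((if i = j then (1:ℝ) else 0) * c k)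
        = ∑ k, ∑ i, v k * E i i * c k := by
      simp [mul_ite, ite_mul, mul_zero, zero_mul, mul_one, Finset.sum_ite_eq,
        Finset.sum_ite_irrel, mul_assoc]
    rw [h]
    refine Finset.sum_eq_zero fun k _ => ?_
    have : ∑ i, v k * E i i * c k = (v k * c k) * ∑ i, E i i := by
      rw [Finset.mul_sum]; exact Finset.sum_congr rfl fun i _ => by ring
    rw [this, hEtrace, mul_zero]
  have a4 : ∑ k, ∑ i, ∑ j, (v i * E k j) * ((if k = i then (1:ℝ) else 0) * c j) = CC := by
    have h : ∑ k, ∑ i, ∑ j, (v i * E k j) * ((if k = i then (1:ℝ) else 0) * c j)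
        = ∑ k, ∑ j, v k * E k j * c j := by
      simp [mul_ite, ite_mul, mul_zero, zero_mul, mul_one, Finset.sum_ite_eq,
        Finset.sum_ite_irrel, mul_assoc]
    rw [h, Finset.sum_comm, hCC]
    refine Finset.sum_congr rfl fun j _ => ?_
    have : ∑ k, v k * E k j * c j = (∑ k, E k j * v k) * c j := by
      rw [Finset.sum_mul]; exact Finset.sum_congr rfl fun k _ => by ring
    rw [this, hcdef' j]; ring
  have a5 : ∑ k, ∑ i, ∑ j, (v i * E k j) * ((if k = j then (1:ℝ) else 0) * c i) = 0 := by
    have h : ∑ k, ∑ i, ∑ j, (v i * E k j) * ((if k = j then (1:ℝ) else 0) * c i)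
        = ∑ k, ∑ i, v i * E k k * c i := by
      simp [mul_ite, ite_mul, mul_zero, zero_mul, mul_one, Finset.sum_ite_eq,
        Finset.sum_ite_irrel, mul_assoc]
    rw [h, Finset.sum_comm]
    refine Finset.sum_eq_zero fun i _ => ?_
    have : ∑ k, v i * E k k * c i = (v i * c i) * ∑ k, E k k := by
      rw [Finset.mul_sum]; exact Finset.sum_congr rfl fun k _ => by ring
    rw [this, hEtrace, mul_zero]
  have a6 : ∑ k, ∑ i, ∑ j, (v i * E k j) * ((if i = j then (1:ℝ) else 0) * c k) = CC := by
    have h : ∑ k, ∑ i, ∑ j, (v i * E k j) * ((if i = j then (1:ℝ) else 0) * c k)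
        = ∑ k, ∑ i, v i * E k i * c k := by
      simp [mul_ite, ite_mul, mul_zero, zero_mul, mul_one, Finset.sum_ite_eq,
        Finset.sum_ite_irrel, mul_assoc]
    rw [h, hCC]
    refine Finset.sum_congr rfl fun k _ => ?_
    have : ∑ i, v i * E k i * c k = (∑ i, E k i * v i) * c k := by
      rw [Finset.sum_mul]; exact Finset.sum_congr rfl fun i _ => by ring
    rw [this, hcdef k]; ring
  have a7 : ∑ k, ∑ i, ∑ j, (v j * E k i) * ((if k = i then (1:ℝ) else 0) * c j) = 0 := by
    have h : ∑ k, ∑ i, ∑ j, (v j * E k i) * ((if k = i then (1:ℝ) else 0) * c j)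
        = ∑ k, ∑ j, v j * E k k * c j := by
      simp [mul_ite, ite_mul, mul_zero, zero_mul, mul_one, Finset.sum_ite_eq,
        Finset.sum_ite_irrel, mul_assoc]
    rw [h]
    have h2 : ∀ k, ∑ j, v j * E k k * c j = E k k * ∑ j, v j * c j := by
      intro k
      rw [Finset.mul_sum]; exact Finset.sum_congr rfl fun j _ => by ring
    calc ∑ k, ∑ j, v j * E k k * c j = ∑ k, E k k * ∑ j, v j * c j :=
        Finset.sum_congr rfl fun k _ => h2 k
      _ = (∑ k, E k k) * ∑ j, v j * c j := by rw [Finset.sum_mul]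
      _ = 0 := by rw [hEtrace, zero_mul]
  have a8 : ∑ k, ∑ i, ∑ j, (v j * E k i) * ((if k = j then (1:ℝ) else 0) * c i) = CC := by
    have h : ∑ k, ∑ i, ∑ j, (v j * E k i) * ((if k = j then (1:ℝ) else 0) * c i)
        = ∑ k, ∑ i, v k * E k i * c i := by
      simp [mul_ite, ite_mul, mul_zero, zero_mul, mul_one, Finset.sum_ite_eq,
        Finset.sum_ite_irrel, mul_assoc]
    rw [h, Finset.sum_comm, hCC]
    refine Finset.sum_congr rfl fun i _ => ?_
    have : ∑ k, v k * E k i * c i = (∑ k, E k i * v k) * c i := by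
      rw [Finset.sum_mul]; exact Finset.sum_congr rfl fun k _ => by ring
    rw [this, hcdef' i]; ring
  have a9 : ∑ k, ∑ i, ∑ j, (v j * E k i) * ((if i = j then (1:ℝ) else 0) * c k) = CC := by
    have h : ∑ k, ∑ i, ∑ j, (v j * E k i) * ((if i = j then (1:ℝ) else 0) * c k)
        = ∑ k, ∑ i, v i * E k i * c k := by
      simp [mul_ite, ite_mul, mul_zero, zero_mul, mul_one, Finset.sum_ite_eq,
        Finset.sum_ite_irrel, mul_assoc]
    rw [h, hCC]
    refine Finset.sum_congr rfl fun k _ => ?_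
    have : ∑ i, v i * E k i * c k = (∑ i, E k i * v i) * c k := by
      rw [Finset.sum_mul]; exact Finset.sum_congr rfl fun i _ => by ring
    rw [this, hcdef k]; ring
  -- delta-delta terms
  have p1 : ∑ k : Fin n, ∑ i : Fin n, ∑ j : Fin n, ((if k = i then (1:ℝ) else 0) * c j) ^ 2 = (n:ℝ) * CC := by
    rw [hCC]
    simp [mul_ite, ite_mul, mul_zero, zero_mul, mul_one, Finset.sum_ite_eq,
      Finset.sum_ite_irrel, mul_pow, Finset.mul_sum, Finset.sum_mul]
  have p2 : ∑ k : Fin n, ∑ i : Fin n, ∑ j : Fin n, ((if k = j then (1:ℝ) else 0) * c i) ^ 2 = (n:ℝ) * CC := by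
    rw [hCC]
    simp [mul_ite, ite_mul, mul_zero, zero_mul, mul_one, Finset.sum_ite_eq,
      Finset.sum_ite_irrel, mul_pow, Finset.mul_sum, Finset.sum_mul]
  have p3 : ∑ k : Fin n, ∑ i : Fin n, ∑ j : Fin n, ((if i = j then (1:ℝ) else 0) * c k) ^ 2 = (n:ℝ) * CC := by
    rw [hCC]
    simp [mul_ite, ite_mul, mul_zero, zero_mul, mul_one, Finset.sum_ite_eq,
      Finset.sum_ite_irrel, mul_pow, Finset.mul_sum, Finset.sum_mul]
  have p4 : ∑ k : Fin n, ∑ i : Fin n, ∑ j : Fin n, ((if k = i then (1:ℝ) else 0) * c j)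
      * ((if k = j then (1:ℝ) else 0) * c i) = CC := by
    rw [hCC]
    simp [mul_ite, ite_mul, mul_zero, zero_mul, mul_one, Finset.sum_ite_eq,
      Finset.sum_ite_irrel, sq]
  have p5 : ∑ k : Fin n, ∑ i : Fin n, ∑ j : Fin n, ((if k = i then (1:ℝ) else 0) * c j)
      * ((if i = j then (1:ℝ) else 0) * c k) = CC := by
    rw [hCC]
    simp [mul_ite, ite_mul, mul_zero, zero_mul, mul_one, Finset.sum_ite_eq,
      Finset.sum_ite_irrel, sq]
  have p6 : ∑ k : Fin n, ∑ i : Fin n, ∑ j : Fin n, ((if k = j then (1:ℝ) else 0) * c i)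
      * ((if i = j then (1:ℝ) else 0) * c k) = CC := by
    rw [hCC]
    simp [mul_ite, ite_mul, mul_zero, zero_mul, mul_one, Finset.sum_ite_eq,
      Finset.sum_ite_irrel, sq]
  -- |S|² identity
  have hSS : 3 * ((n:ℝ) + 2) * (∑ k, ∑ i, ∑ j, (S k i j) ^ 2)
      = ((n:ℝ) + 2) * (V * EE) + 2 * (n:ℝ) * CC := by
    have expand : ∀ k i j, (S k i j) ^ 2 =
        (v k * E i j) ^ 2 / 9 + (v i * E k j) ^ 2 / 9 + (v j * E k i) ^ 2 / 9
        + (2/9) * ((v k * E i j) * (v i * E k j))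
        + (2/9) * ((v k * E i j) * (v j * E k i))
        + (2/9) * ((v i * E k j) * (v j * E k i))
        - (2/3 * β) *
            ((v k * E i j) * ((if k = i then (1:ℝ) else 0) * c j)
            + (v k * E i j) * ((if k = j then (1:ℝ) else 0) * c i)
            + (v k * E i j) * ((if i = j then (1:ℝ) else 0) * c k)
            + (v i * E k j) * ((if k = i then (1:ℝ) else 0) * c j)
            + (v i * E k j) * ((if k = j then (1:ℝ) else 0) * c i)
            + (v i * E k j) * ((if i = j then (1:ℝ) else 0) * c k)
            + (v j * E k i) * ((if k = i then (1:ℝ) else 0) * c j)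
            + (v j * E k i) * ((if k = j then (1:ℝ) else 0) * c i)
            + (v j * E k i) * ((if i = j then (1:ℝ) else 0) * c k))
        + β^2 *
            (((if k = i then (1:ℝ) else 0) * c j) ^ 2
            + ((if k = j then (1:ℝ) else 0) * c i) ^ 2
            + ((if i = j then (1:ℝ) else 0) * c k) ^ 2
            + 2 * (((if k = i then (1:ℝ) else 0) * c j)
                * ((if k = j then (1:ℝ) else 0) * c i))
            + 2 * (((if k = i then (1:ℝ) else 0) * c j)
                * ((if i = j then (1:ℝ) else 0) * c k))
            + 2 * (((if k = j then (1:ℝ) else 0) * c i)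
                * ((if i = j then (1:ℝ) else 0) * c k))) := by
      intro k i j
      simp only [hS]
      ring
    have h : ∑ k, ∑ i, ∑ j, (S k i j) ^ 2 =
        (∑ k, ∑ i, ∑ j, (v k * E i j) ^ 2) / 9
        + (∑ k, ∑ i, ∑ j, (v i * E k j) ^ 2) / 9
        + (∑ k, ∑ i, ∑ j, (v j * E k i) ^ 2) / 9
        + (2/9) * (∑ k, ∑ i, ∑ j, (v k * E i j) * (v i * E k j))
        + (2/9) * (∑ k, ∑ i, ∑ j, (v k * E i j) * (v j * E k i))
        + (2/9) * (∑ k, ∑ i, ∑ j, (v i * E k j) * (v j * E k i))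
        - (2/3 * β) *
            ((∑ k, ∑ i, ∑ j, (v k * E i j) * ((if k = i then (1:ℝ) else 0) * c j))
            + (∑ k, ∑ i, ∑ j, (v k * E i j) * ((if k = j then (1:ℝ) else 0) * c i))
            + (∑ k, ∑ i, ∑ j, (v k * E i j) * ((if i = j then (1:ℝ) else 0) * c k))
            + (∑ k, ∑ i, ∑ j, (v i * E k j) * ((if k = i then (1:ℝ) else 0) * c j))
            + (∑ k, ∑ i, ∑ j, (v i * E k j) * ((if k = j then (1:ℝ) else 0) * c i))
            + (∑ k, ∑ i, ∑ j, (v i * E k j) * ((if i = j then (1:ℝ) else 0) * c k))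
            + (∑ k, ∑ i, ∑ j, (v j * E k i) * ((if k = i then (1:ℝ) else 0) * c j))
            + (∑ k, ∑ i, ∑ j, (v j * E k i) * ((if k = j then (1:ℝ) else 0) * c i))
            + (∑ k, ∑ i, ∑ j, (v j * E k i) * ((if i = j then (1:ℝ) else 0) * c k)))
        + β^2 *
            ((∑ k : Fin n, ∑ i : Fin n, ∑ j : Fin n, ((if k = i then (1:ℝ) else 0) * c j) ^ 2)
            + (∑ k : Fin n, ∑ i : Fin n, ∑ j : Fin n, ((if k = j then (1:ℝ) else 0) * c i) ^ 2)
            + (∑ k : Fin n, ∑ i : Fin n, ∑ j : Fin n, ((if i = j then (1:ℝ) else 0) * c k) ^ 2)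
            + 2 * (∑ k : Fin n, ∑ i : Fin n, ∑ j : Fin n, ((if k = i then (1:ℝ) else 0) * c j)
                * ((if k = j then (1:ℝ) else 0) * c i))
            + 2 * (∑ k : Fin n, ∑ i : Fin n, ∑ j : Fin n, ((if k = i then (1:ℝ) else 0) * c j)
                * ((if i = j then (1:ℝ) else 0) * c k))
            + 2 * (∑ k : Fin n, ∑ i : Fin n, ∑ j : Fin n, ((if k = j then (1:ℝ) else 0) * c i)
                * ((if i = j then (1:ℝ) else 0) * c k))) := by
      rw [show (∑ k, ∑ i, ∑ j, (S k i j) ^ 2) = ∑ k, ∑ i, ∑ j, ((v k * E i j) ^ 2 / 9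
          + (v i * E k j) ^ 2 / 9 + (v j * E k i) ^ 2 / 9
          + (2/9) * ((v k * E i j) * (v i * E k j))
          + (2/9) * ((v k * E i j) * (v j * E k i))
          + (2/9) * ((v i * E k j) * (v j * E k i))
          - (2/3 * β) *
              ((v k * E i j) * ((if k = i then (1:ℝ) else 0) * c j)
              + (v k * E i j) * ((if k = j then (1:ℝ) else 0) * c i)
              + (v k * E i j) * ((if i = j then (1:ℝ) else 0) * c k)
              + (v i * E k j) * ((if k = i then (1:ℝ) else 0) * c j)
              + (v i * E k j) * ((if k = j then (1:ℝ) else 0) * c i)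
              + (v i * E k j) * ((if i = j then (1:ℝ) else 0) * c k)
              + (v j * E k i) * ((if k = i then (1:ℝ) else 0) * c j)
              + (v j * E k i) * ((if k = j then (1:ℝ) else 0) * c i)
              + (v j * E k i) * ((if i = j then (1:ℝ) else 0) * c k))
          + β^2 *
              (((if k = i then (1:ℝ) else 0) * c j) ^ 2
              + ((if k = j then (1:ℝ) else 0) * c i) ^ 2
              + ((if i = j then (1:ℝ) else 0) * c k) ^ 2
              + 2 * (((if k = i then (1:ℝ) else 0) * c j)
                  * ((if k = j then (1:ℝ) else 0) * c i))
              + 2 * (((if k = i then (1:ℝ) else 0) * c j)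
                  * ((if i = j then (1:ℝ) else 0) * c k))
              + 2 * (((if k = j then (1:ℝ) else 0) * c i)
                  * ((if i = j then (1:ℝ) else 0) * c k)))) from
        Finset.sum_congr rfl fun k _ => Finset.sum_congr rfl fun i _ =>
          Finset.sum_congr rfl fun j _ => expand k i j]
      simp only [Finset.sum_add_distrib, Finset.sum_sub_distrib, ← Finset.sum_div,
        ← Finset.mul_sum]
    rw [h, q1, q2, q3, x1, x2, x3, a1, a2, a3, a4, a5, a6, a7, a8, a9,
      p1, p2, p3, p4, p5, p6, hβ]
    field_simp
    ring
  -- Cauchy–Schwarz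
  have hCS : V ^ 2 ≤ TT * (∑ k, ∑ i, ∑ j, (S k i j) ^ 2) := by
    have hcs := Finset.sum_mul_sq_le_sq_mul_sq (univ : Finset (Fin n × Fin n × Fin n))
      (fun p => T p.1 p.2.1 p.2.2) (fun p => S p.1 p.2.1 p.2.2)
    simp only [Fintype.sum_prod_type] at hcs
    calc V ^ 2 = (∑ k, ∑ i, ∑ j, T k i j * S k i j) ^ 2 := by rw [hTS]
      _ ≤ (∑ k, ∑ i, ∑ j, (T k i j) ^ 2) * (∑ k, ∑ i, ∑ j, (S k i j) ^ 2) := hcs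
      _ = TT * (∑ k, ∑ i, ∑ j, (S k i j) ^ 2) := by rw [hTT]
  -- the operator-norm bound
  have hKB : (n:ℝ) * CC ≤ ((n:ℝ) - 1) * EE * V := by
    have hkb := kato_opnorm n E hEsymm hEtrace v
    simp only [hcdef] at hkb
    rw [← hCC, ← hEE, ← hV] at hkb
    exact hkb
  -- put everything together
  have hCS' : 3 * ((n:ℝ) + 2) * V ^ 2 ≤ TT * (((n:ℝ) + 2) * (V * EE) + 2 * (n:ℝ) * CC) := by
    calc 3 * ((n:ℝ) + 2) * V ^ 2
        ≤ 3 * ((n:ℝ) + 2) * (TT * (∑ k, ∑ i, ∑ j, (S k i j) ^ 2)) := by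
          exact mul_le_mul_of_nonneg_left hCS (by linarith)
      _ = TT * (3 * ((n:ℝ) + 2) * (∑ k, ∑ i, ∑ j, (S k i j) ^ 2)) := by ring
      _ = TT * (((n:ℝ) + 2) * (V * EE) + 2 * (n:ℝ) * CC) := by rw [hSS]
  have hV0 : 0 ≤ V := by
    rw [hV]; exact Finset.sum_nonneg fun _ _ => sq_nonneg _
  have hTT0 : 0 ≤ TT := by
    rw [hTT]
    exact Finset.sum_nonneg fun _ _ => Finset.sum_nonneg fun _ _ =>
      Finset.sum_nonneg fun _ _ => sq_nonneg _
  have hEE0 : 0 ≤ EE := by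
    rw [hEE]
    exact Finset.sum_nonneg fun _ _ => Finset.sum_nonneg fun _ _ => sq_nonneg _
  have hCC0 : 0 ≤ CC := by
    rw [hCC]; exact Finset.sum_nonneg fun _ _ => sq_nonneg _
  show V ≤ (n:ℝ) / ((n:ℝ) + 2) * TT * EE
  clear hTS hSS hCS t1 t2 t3 t4 t5 t6 q1 q2 q3 x1 x2 x3 a1 a2 a3 a4 a5 a6 a7 a8 a9
    p1 p2 p3 p4 p5 p6 hvdef hcdef hcdef' hS hv hc hV hTT hEE hCC hβ
  clear_value v c V TT EE CC S β
  rcases eq_or_lt_of_le hV0 with hz | hVpos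
  · rw [← hz]
    have h1 : 0 ≤ (n:ℝ) / ((n:ℝ) + 2) := by positivity
    have := mul_nonneg (mul_nonneg h1 hTT0) hEE0
    linarith
  · have hint : 0 ≤ TT * (2 * (((n:ℝ) - 1) * EE * V - (n:ℝ) * CC)) :=
      mul_nonneg hTT0 (by linarith)
    have key : (((n:ℝ) + 2) * V) * (3 * V) ≤ ((n:ℝ) * TT * EE) * (3 * V) := by
      nlinarith [hCS', hint]
    have final : ((n:ℝ) + 2) * V ≤ (n:ℝ) * TT * EE :=
      le_of_mul_le_mul_right key (by linarith)
    rw [div_mul_eq_mul_div, div_mul_eq_mul_div, le_div_iff₀ hn2pos]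
    linarith
end
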